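/- arXiv:1201.3845 — 2 statements merged into one kernel-verified Lean document; each statement's English description precedes it below -/
import Mathlib

section
/- The function m(ξ,ξ₁) = ∫_0^1 sgn(ξ + α ξ₁) dα is continuous on ℝ² \ {(0,0)}, but it is not continuously differentiable across the lines ξ=0 and ξ+ξ₁=0; away from these two lines it is smooth. -/
open MeasureTheory

/-- The symbol of the first Calderón commutator. -/
noncomputable def commutatorSymbol (p : ℝ × ℝ) : ℝ :=
  ∫ α in (0:ℝ)..1, Real.sign (p.1 + α * p.2)

lemma real_sign_cast (u : ℝ) : (SignType.sign u : ℝ) = Real.sign u := by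
  rcases lt_trichotomy u 0 with h | h | h
  · simp [h, Real.sign_of_neg h]
  · simp [h]
  · simp [h, Real.sign_of_pos h]

lemma measurable_real_sign : Measurable Real.sign := by
  unfold Real.sign
  exact Measurable.ite (measurableSet_lt measurable_id measurable_const) measurable_const
    (Measurable.ite (measurableSet_lt measurable_const measurable_id) measurable_const measurable_const)

lemma abs_real_sign (u : ℝ) : |Real.sign u| ≤ 1 := by
  rcases Real.sign_apply_eq u with h | h | h <;> simp [h]

lemma sign_mul_self' (d : ℝ) (hd : d ≠ 0) : Real.sign d * d = |d| := by
  rcases hd.lt_or_gt with h | h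
  · rw [Real.sign_of_neg h, abs_of_neg h]; ring
  · rw [Real.sign_of_pos h, abs_of_pos h]; ring

lemma F_hasDerivAt {c d : ℝ} (hd : d ≠ 0) {x : ℝ} (hx : c + x * d ≠ 0) :
    HasDerivAt (fun α => |c + α * d| / d) (Real.sign (c + x * d)) x := by
  have h1 : HasDerivAt (fun α : ℝ => c + α * d) d x := (hasDerivAt_mul_const d).const_add c
  have h2 := (hasDerivAt_abs hx).comp x h1
  have h3 := h2.div_const d
  convert h3 using 1
  all_goals try rfl
  rw [real_sign_cast]
  field_simp

lemma commutatorSymbol_eq {c d : ℝ} (hd : d ≠ 0) :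
    commutatorSymbol (c, d) = (|c + d| - |c|) / d := by
  set f' : ℝ → ℝ := fun α => if c + α * d = 0 then Real.sign d else Real.sign (c + α * d) with hf'
  have hae : (fun α => Real.sign (c + α * d)) =ᵐ[volume] f' := by
    have hnull : (volume : Measure ℝ) {α | c + α * d = 0} = 0 := by
      have : {α : ℝ | c + α * d = 0} ⊆ {-c / d} := by
        intro α hα
        simp only [Set.mem_setOf_eq] at hα
        have : α = -c / d := by field_simp; linarith
        simp [this]
      exact measure_mono_null this (measure_singleton _)
    filter_upwards [measure_eq_zero_iff_ae_notMem.mp hnull] with α hα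
    have hne : ¬ (c + α * d = 0) := hα
    simp [hf', hne]
  have hint : IntervalIntegrable f' volume 0 1 := by
    apply IntervalIntegrable.mono_fun (intervalIntegrable_const (c := (1:ℝ)))
    · apply Measurable.aestronglyMeasurable
      exact Measurable.ite (measurableSet_eq_fun (measurable_const.add
        (measurable_id.mul measurable_const)) measurable_const) measurable_const
        (measurable_real_sign.comp (measurable_const.add (measurable_id.mul measurable_const)))
    · filter_upwards with α
      simp only [Real.norm_eq_abs]
      rw [abs_one]
      by_cases h : c + α * d = 0 <;> simp [hf', h, abs_real_sign]
  have hFTC : ∫ α in (0:ℝ)..1, f' α = |c + 1 * d| / d - |c + 0 * d| / d := by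
    apply intervalIntegral.integral_eq_sub_of_hasDeriv_right_of_le (f := fun α => |c + α * d| / d) zero_le_one
    · exact (Continuous.continuousOn (by continuity))
    · intro x _
      by_cases hx : c + x * d = 0
      · have hG : HasDerivAt (fun α : ℝ => Real.sign d * (c + α * d) / d) (Real.sign d) x := by
          have h1 : HasDerivAt (fun α : ℝ => c + α * d) d x := (hasDerivAt_mul_const d).const_add c
          have := (h1.const_mul (Real.sign d)).div_const d
          convert this using 1
          all_goals try rfl
          field_simp
        have heq : ∀ y ∈ Set.Ioi x, |c + y * d| / d = Real.sign d * (c + y * d) / d := by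
          intro y hy
          have hyx : c + y * d = (y - x) * d := by
            have : c + x * d = 0 := hx
            ring_nf
            linarith [this]
          congr 1
          rw [hyx, abs_mul, abs_of_pos (sub_pos.mpr hy), ← sign_mul_self' d hd]
          ring
        have hx0 : |c + x * d| / d = Real.sign d * (c + x * d) / d := by
          simp [hx]
        have : f' x = Real.sign d := by simp [hf', hx]
        rw [this]
        exact (hG.hasDerivWithinAt).congr heq hx0
      · have : f' x = Real.sign (c + x * d) := by simp [hf', hx]
        rw [this]
        exact (F_hasDerivAt hd hx).hasDerivWithinAt
    · exact hint
  have : commutatorSymbol (c, d) = ∫ α in (0:ℝ)..1, f' α := by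
    unfold commutatorSymbol
    exact intervalIntegral.integral_congr_ae (by filter_upwards [hae] with α h _ using h)
  rw [this, hFTC]
  rw [one_mul, zero_mul, add_zero, sub_div]

lemma commutatorSymbol_pos {c d : ℝ} (h1 : 0 < c) (h2 : 0 < c + d) :
    commutatorSymbol (c, d) = 1 := by
  unfold commutatorSymbol
  rw [intervalIntegral.integral_congr (g := fun _ => (1:ℝ))]
  · simp
  · intro α hα
    rw [Set.uIcc_of_le zero_le_one] at hα
    obtain ⟨h0, h1'⟩ := hα
    have : 0 < c + α * d := by
      rcases le_or_gt 0 d with hd | hd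
      · nlinarith [mul_nonneg h0 hd]
      · nlinarith [mul_nonneg (sub_nonneg.mpr h1') (neg_nonneg.mpr hd.le)]
    simp [Real.sign_of_pos this]

lemma commutatorSymbol_neg {c d : ℝ} (h1 : c < 0) (h2 : c + d < 0) :
    commutatorSymbol (c, d) = -1 := by
  unfold commutatorSymbol
  rw [intervalIntegral.integral_congr (g := fun _ => (-1:ℝ))]
  · simp
  · intro α hα
    rw [Set.uIcc_of_le zero_le_one] at hα
    obtain ⟨h0, h1'⟩ := hα
    have : c + α * d < 0 := by
      rcases le_or_gt 0 d with hd | hd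
      · nlinarith [mul_nonneg (sub_nonneg.mpr h1') hd]
      · nlinarith [mul_nonneg h0 (neg_nonneg.mpr hd.le)]
    simp [Real.sign_of_neg this]

open Filter Topology

lemma eventually_eq_formula {p : ℝ × ℝ} (hp : p.2 ≠ 0) :
    commutatorSymbol =ᶠ[𝓝 p] fun q => (|q.1 + q.2| - |q.1|) / q.2 := by
  have hopen : IsOpen {q : ℝ × ℝ | q.2 ≠ 0} :=
    isOpen_compl_singleton.preimage continuous_snd
  filter_upwards [hopen.mem_nhds hp] with q hq
  have := commutatorSymbol_eq (c := q.1) (d := q.2) hq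
  simpa using this

lemma commutatorSymbol_smooth {p : ℝ × ℝ} (h1 : p.1 ≠ 0) (h2 : p.1 + p.2 ≠ 0) :
    ContDiffAt ℝ (⊤ : ℕ∞) commutatorSymbol p := by
  rcases h1.lt_or_gt with ha | ha <;> rcases h2.lt_or_gt with hb | hb
  · -- both negative : locally -1
    have hW : IsOpen {q : ℝ × ℝ | q.1 < 0 ∧ q.1 + q.2 < 0} :=
      (isOpen_lt continuous_fst continuous_const).inter
        (isOpen_lt (continuous_fst.add continuous_snd) continuous_const)
    have hev : commutatorSymbol =ᶠ[𝓝 p] fun _ => (-1 : ℝ) := by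
      filter_upwards [hW.mem_nhds ⟨ha, hb⟩] with q hq
      have := commutatorSymbol_neg hq.1 hq.2
      simpa using this
    exact contDiffAt_const.congr_of_eventuallyEq hev
  · -- p.1 < 0 < p.1 + p.2
    have hp2 : (0:ℝ) < p.2 := by linarith
    have hW : IsOpen {q : ℝ × ℝ | q.1 < 0 ∧ 0 < q.1 + q.2} :=
      (isOpen_lt continuous_fst continuous_const).inter
        (isOpen_lt continuous_const (continuous_fst.add continuous_snd))
    have hev : commutatorSymbol =ᶠ[𝓝 p] fun q => ((q.1 + q.2) + q.1) / q.2 := by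
      filter_upwards [hW.mem_nhds ⟨ha, hb⟩] with q hq
      have hq2 : q.2 ≠ 0 := by have := hq.1; have := hq.2; intro h; simp at *; linarith
      have := commutatorSymbol_eq (c := q.1) (d := q.2) hq2
      simp only [Prod.mk.eta] at this
      rw [this, abs_of_pos hq.2, abs_of_neg hq.1]
      ring_nf
    have hg : ContDiffAt ℝ (⊤ : ℕ∞) (fun q : ℝ × ℝ => ((q.1 + q.2) + q.1) / q.2) p :=
      ContDiffAt.div (((contDiff_fst.add contDiff_snd).add contDiff_fst).contDiffAt)
        contDiff_snd.contDiffAt hp2.ne'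
    exact hg.congr_of_eventuallyEq hev
  · -- p.1 + p.2 < 0 < p.1
    have hp2 : p.2 < 0 := by linarith
    have hW : IsOpen {q : ℝ × ℝ | 0 < q.1 ∧ q.1 + q.2 < 0} :=
      (isOpen_lt continuous_const continuous_fst).inter
        (isOpen_lt (continuous_fst.add continuous_snd) continuous_const)
    have hev : commutatorSymbol =ᶠ[𝓝 p] fun q => (-(q.1 + q.2) - q.1) / q.2 := by
      filter_upwards [hW.mem_nhds ⟨ha, hb⟩] with q hq
      have hq2 : q.2 ≠ 0 := by have := hq.1; have := hq.2; intro h; simp at *; linarith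
      have := commutatorSymbol_eq (c := q.1) (d := q.2) hq2
      simp only [Prod.mk.eta] at this
      rw [this, abs_of_neg hq.2, abs_of_pos hq.1]
    have hg : ContDiffAt ℝ (⊤ : ℕ∞) (fun q : ℝ × ℝ => (-(q.1 + q.2) - q.1) / q.2) p :=
      ContDiffAt.div (((contDiff_fst.add contDiff_snd).neg.sub contDiff_fst).contDiffAt)
        contDiff_snd.contDiffAt hp2.ne
    exact hg.congr_of_eventuallyEq hev
  · -- both positive : locally 1
    have hW : IsOpen {q : ℝ × ℝ | 0 < q.1 ∧ 0 < q.1 + q.2} :=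
      (isOpen_lt continuous_const continuous_fst).inter
        (isOpen_lt continuous_const (continuous_fst.add continuous_snd))
    have hev : commutatorSymbol =ᶠ[𝓝 p] fun _ => (1 : ℝ) := by
      filter_upwards [hW.mem_nhds ⟨ha, hb⟩] with q hq
      have := commutatorSymbol_pos hq.1 hq.2
      simpa using this
    exact contDiffAt_const.congr_of_eventuallyEq hev

lemma commutatorSymbol_not_diff {p : ℝ × ℝ} (hp : p ≠ 0)
    (hline : p.1 = 0 ∨ p.1 + p.2 = 0) : ¬ ContDiffAt ℝ 1 commutatorSymbol p := by
  intro hC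
  have hd : DifferentiableAt ℝ commutatorSymbol p := hC.differentiableAt one_ne_zero
  rcases hline with hA | hB
  · -- across the line ξ = 0
    have h2 : p.2 ≠ 0 := by
      intro h; exact hp (Prod.ext_iff.mpr ⟨hA, h⟩)
    have hpe : p = ((0 : ℝ), p.2) := Prod.ext_iff.mpr ⟨hA, rfl⟩
    have hL : DifferentiableAt ℝ (fun t : ℝ => ((t, p.2) : ℝ × ℝ)) 0 :=
      differentiableAt_id.prodMk (differentiableAt_const _)
    have hd' : DifferentiableAt ℝ commutatorSymbol ((0 : ℝ), p.2) := hpe ▸ hd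
    have hcomp : DifferentiableAt ℝ (fun t => commutatorSymbol (t, p.2)) 0 :=
      DifferentiableAt.comp (g := commutatorSymbol) 0 hd' hL
    have heq : (fun t => commutatorSymbol (t, p.2)) =
        fun t => (|t + p.2| - |t|) / p.2 :=
      funext fun t => commutatorSymbol_eq h2
    rw [heq] at hcomp
    have h0 : (0 : ℝ) + p.2 ≠ 0 := by simpa using h2
    have habs1 : DifferentiableAt ℝ (fun t : ℝ => |t + p.2|) 0 :=
      (HasDerivAt.comp (h₂ := fun x : ℝ => |x|) 0 (hasDerivAt_abs h0) ((hasDerivAt_id 0).add_const p.2)).differentiableAt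
    have habs : DifferentiableAt ℝ (fun t : ℝ => |t|) 0 := by
      have hrw : (fun t : ℝ => |t|) =
          fun t => |t + p.2| - p.2 * ((|t + p.2| - |t|) / p.2) := by
        funext t; field_simp <;> ring
      rw [hrw]
      exact habs1.sub (hcomp.const_mul p.2)
    exact not_differentiableAt_abs_zero habs
  · -- across the line ξ + ξ₁ = 0
    have h1 : p.1 ≠ 0 := by
      intro h
      exact hp (Prod.ext_iff.mpr ⟨h, show p.2 = 0 by linarith⟩)
    have hpe : p = ((p.1 : ℝ), -p.1) := Prod.ext_iff.mpr ⟨rfl, show p.2 = -p.1 by linarith⟩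
    have hL : DifferentiableAt ℝ (fun t : ℝ => ((p.1, t - p.1) : ℝ × ℝ)) 0 :=
      (differentiableAt_const (p.1 : ℝ)).prodMk (differentiableAt_id.sub_const p.1)
    have hd' : DifferentiableAt ℝ commutatorSymbol ((p.1 : ℝ), -p.1) := hpe ▸ hd
    have hL0 : (fun t : ℝ => ((p.1, t - p.1) : ℝ × ℝ)) 0 = ((p.1 : ℝ), -p.1) := by
      simp
    have hd'' : DifferentiableAt ℝ commutatorSymbol ((p.1 : ℝ), 0 - p.1) := by
      simpa using hd'
    have hcomp : DifferentiableAt ℝ (fun t => commutatorSymbol (p.1, t - p.1)) 0 :=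
      DifferentiableAt.comp (g := commutatorSymbol) 0 hd'' hL
    have hev : (fun t => commutatorSymbol (p.1, t - p.1)) =ᶠ[𝓝 (0:ℝ)]
        fun t => (|t| - |p.1|) / (t - p.1) := by
      filter_upwards [eventually_ne_nhds (Ne.symm h1)] with t ht
      have hne : t - p.1 ≠ 0 := sub_ne_zero.mpr ht
      have := commutatorSymbol_eq (c := p.1) (d := t - p.1) hne
      rw [this]
      have hsum : p.1 + (t - p.1) = t := by ring
      rw [hsum]
    have hdiv : DifferentiableAt ℝ (fun t => (|t| - |p.1|) / (t - p.1)) 0 :=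
      hcomp.congr_of_eventuallyEq hev.symm
    have habs : DifferentiableAt ℝ (fun t : ℝ => |t|) 0 := by
      have hrw : (fun t : ℝ => |t|) =
          fun t => (t - p.1) * ((|t| - |p.1|) / (t - p.1)) + |p.1| := by
        funext t
        by_cases ht : t = p.1
        · simp [ht]
        · field_simp [sub_ne_zero.mpr ht] <;> ring
      rw [hrw]
      exact ((differentiableAt_id.sub_const p.1).mul hdiv).add_const _
    exact not_differentiableAt_abs_zero habs

/-- The symbol `m(ξ,ξ₁) = ∫_0^1 sgn(ξ+αξ₁) dα` is continuous on `ℝ² \ {(0,0)}`,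
smooth away from the lines `ξ = 0` and `ξ + ξ₁ = 0`, but not continuously
differentiable across those two lines. -/
theorem commutatorSymbol_regularity :
    ContinuousOn commutatorSymbol {p : ℝ × ℝ | p ≠ 0} ∧
    (∀ p : ℝ × ℝ, p.1 ≠ 0 → p.1 + p.2 ≠ 0 → ContDiffAt ℝ (⊤ : ℕ∞) commutatorSymbol p) ∧
    (∀ p : ℝ × ℝ, p ≠ 0 → (p.1 = 0 ∨ p.1 + p.2 = 0) →
      ¬ ContDiffAt ℝ 1 commutatorSymbol p) := by
  refine ⟨?_, fun p h1 h2 => commutatorSymbol_smooth h1 h2,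
    fun p hp hl => commutatorSymbol_not_diff hp hl⟩
  intro p hp
  apply ContinuousAt.continuousWithinAt
  by_cases h2 : p.2 = 0
  · have h1 : p.1 ≠ 0 := by
      intro h; exact hp (Prod.ext_iff.mpr ⟨h, h2⟩)
    have hsum : p.1 + p.2 ≠ 0 := by rw [h2, add_zero]; exact h1
    exact (commutatorSymbol_smooth h1 hsum).continuousAt
  · have hc : ContinuousAt (fun q : ℝ × ℝ => (|q.1 + q.2| - |q.1|) / q.2) p :=
      ContinuousAt.div
        (((continuous_fst.add continuous_snd).abs.sub continuous_fst.abs).continuousAt)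
        continuous_snd.continuousAt h2
    exact hc.congr (eventually_eq_formula h2).symm
end

section
/- Let b be an integrable function supported on an interval J with ∫ b = 0 and ‖b‖₁ ≤ λ|J|, and let Φ_K^∞ be an L^∞-normalized bump adapted to a dyadic interval K with |K| > |J|. Then |⟨b, Φ_K^∞⟩| ≲ λ|J| · (|J|/|K|) · (1 + dist(K,J)/|K|)^{-10}, and consequently Σ_{|K|>|J|} |⟨b, Φ_K^∞⟩| ≲ λ|J|. -/
open MeasureTheory

/-- The dyadic interval `[2^k m, 2^k (m+1)]`. -/
noncomputable def dyadIcc (k m : ℤ) : Set ℝ :=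
  Set.Icc ((2:ℝ) ^ k * m) ((2:ℝ) ^ k * (m + 1))

/-- Distance between two sets of reals. -/
noncomputable def setDist (s t : Set ℝ) : ℝ :=
  sInf {r : ℝ | ∃ x ∈ s, ∃ y ∈ t, r = dist x y}

/-! Since `∫ b = 0`, one may pair `b` with `Φ_K - Φ_K(c)` instead of `Φ_K`; by the mean value
theorem this is at most `|J| · |K|⁻¹ (1 + dist(K, J)/|K|)^(-N)` on `J`, which gives the single
bound with constant `1`. At a fixed scale `|K| = 2^k > |J|`, the decay factors of the translates
`K` are dominated by a shifted copy of the summable weight `(|n + 1/2|/3)^(-N)`, `N > 1`, and the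
factors `|J|/2^k` over the scales form a geometric series of sum at most `2`. -/

open Set

lemma le_setDist {s t : Set ℝ} (hs : s.Nonempty) (ht : t.Nonempty) {r : ℝ}
    (h : ∀ x ∈ s, ∀ y ∈ t, r ≤ dist x y) : r ≤ setDist s t := by
  obtain ⟨x, hx⟩ := hs
  obtain ⟨y, hy⟩ := ht
  refine le_csInf ⟨dist x y, x, hx, y, hy, rfl⟩ ?_
  rintro _ ⟨x, hx, y, hy, rfl⟩
  exact h x hx y hy

lemma setDist_nonneg (s t : Set ℝ) : 0 ≤ setDist s t :=
  Real.sInf_nonneg fun _ ⟨_, _, _, _, h⟩ => h ▸ dist_nonneg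

lemma setDist_le_infDist {s t : Set ℝ} {x : ℝ} (hs : s.Nonempty) (hx : x ∈ t) :
    setDist s t ≤ Metric.infDist x s := by
  refine (Metric.le_infDist hs).2 fun y hy => ?_
  refine csInf_le ⟨0, ?_⟩ ⟨y, hy, x, hx, dist_comm x y⟩
  rintro _ ⟨x, -, y, -, rfl⟩
  exact dist_nonneg

lemma dyadIcc_nonempty (k m : ℤ) : (dyadIcc k m).Nonempty :=
  nonempty_Icc.2 <| mul_le_mul_of_nonneg_left (by linarith) (zpow_pos two_pos k).le

theorem abs_integral_mul_le_of_integral_eq_zero {b g : ℝ → ℝ} {c d M : ℝ}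
    (hb : Integrable b) (hsupp : Function.support b ⊆ Icc c d) (hmean : ∫ y, b y = 0)
    (hg : Differentiable ℝ g) (hg' : ∀ x ∈ Icc c d, |deriv g x| ≤ M) :
    |∫ y, b y * g y| ≤ (∫ y, |b y|) * (M * (d - c)) := by
  have hosc : ∀ y, ‖b y * (g y - g c)‖ ≤ |b y| * (M * (d - c)) := by
    intro y
    by_cases hy : b y = 0
    · simp [hy]
    have hy := hsupp hy
    have hc : c ∈ Icc c d := ⟨le_rfl, hy.1.trans hy.2⟩
    have hM : 0 ≤ M := (abs_nonneg _).trans (hg' c hc)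
    have hmvt := Convex.norm_image_sub_le_of_norm_deriv_le (fun x _ => hg x) hg'
      (convex_Icc c d) hc hy
    rw [Real.norm_eq_abs, Real.norm_eq_abs, abs_of_nonneg (sub_nonneg.2 hy.1)] at hmvt
    rw [Real.norm_eq_abs, abs_mul]
    gcongr
    exact hmvt.trans (by gcongr; exact hy.2)
  have hint : Integrable (fun y => b y * (g y - g c)) :=
    (hb.abs.mul_const _).mono'
      (hb.aestronglyMeasurable.mul (hg.continuous.sub continuous_const).aestronglyMeasurable)
      (ae_of_all _ hosc)
  have hsplit : ∫ y, b y * g y = ∫ y, b y * (g y - g c) := by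
    calc ∫ y, b y * g y = ∫ y, (b y * (g y - g c) + g c * b y) := by congr 1; ext y; ring
    _ = _ := by rw [integral_add hint (hb.const_mul _), integral_const_mul, hmean]; simp
  rw [hsplit, ← integral_mul_const]
  exact norm_integral_le_of_norm_le (hb.abs.mul_const _) (ae_of_all _ hosc)

theorem abs_integral_mul_le_of_deriv_decay {b Φ : ℝ → ℝ} {c d p N : ℝ} {K : Set ℝ}
    (hb : Integrable b) (hsupp : Function.support b ⊆ Icc c d) (hmean : ∫ y, b y = 0)
    (hK : K.Nonempty) (hp : 0 < p) (hN : 0 ≤ N) (hΦ : Differentiable ℝ Φ)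
    (hΦ' : ∀ x, |deriv Φ x| ≤ p⁻¹ * (1 + Metric.infDist x K / p) ^ (-N)) :
    |∫ y, b y * Φ y| ≤ (∫ y, |b y|) * (p⁻¹ * (1 + setDist K (Icc c d) / p) ^ (-N) * (d - c)) := by
  refine abs_integral_mul_le_of_integral_eq_zero hb hsupp hmean hΦ fun x hx => (hΦ' x).trans ?_
  have hdist := setDist_nonneg K (Icc c d)
  have hinf := setDist_le_infDist hK hx
  have hbase : 0 < 1 + setDist K (Icc c d) / p := by positivity
  exact mul_le_mul_of_nonneg_left
    (Real.rpow_le_rpow_of_nonpos hbase (by gcongr) (neg_nonpos.2 hN)) (inv_nonneg.2 hp.le)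

noncomputable def dyadicDecay (N : ℝ) (k m : ℤ) (s : Set ℝ) : ℝ :=
  (1 + setDist (dyadIcc k m) s / 2 ^ k) ^ (-N)

lemma dyadicDecay_nonneg (N : ℝ) (k m : ℤ) (s : Set ℝ) : 0 ≤ dyadicDecay N k m s :=
  Real.rpow_nonneg (by have := setDist_nonneg (dyadIcc k m) s; positivity) _

theorem abs_integral_mul_le_dyadicDecay {b Φ : ℝ → ℝ} {c d lam N : ℝ} {k m : ℤ}
    (hb : Integrable b) (hsupp : Function.support b ⊆ Icc c d) (hmean : ∫ y, b y = 0)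
    (hL1 : ∫ y, |b y| ≤ lam * (d - c)) (hcd : c ≤ d) (hN : 0 ≤ N) (hΦ : Differentiable ℝ Φ)
    (hΦ' : ∀ x, |deriv Φ x| ≤
      (2 ^ k)⁻¹ * (1 + Metric.infDist x (dyadIcc k m) / 2 ^ k) ^ (-N)) :
    |∫ y, b y * Φ y| ≤ lam * (d - c) * ((d - c) / 2 ^ k * dyadicDecay N k m (Icc c d)) := by
  have hp : (0 : ℝ) < 2 ^ k := zpow_pos two_pos k
  have hD := dyadicDecay_nonneg N k m (Icc c d)
  calc _ ≤ (∫ y, |b y|) * ((2 ^ k)⁻¹ * dyadicDecay N k m (Icc c d) * (d - c)) :=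
        abs_integral_mul_le_of_deriv_decay hb hsupp hmean (dyadIcc_nonempty k m) hp hN hΦ hΦ'
  _ ≤ lam * (d - c) * ((2 ^ k)⁻¹ * dyadicDecay N k m (Icc c d) * (d - c)) := by
        gcongr
  _ = _ := by ring

lemma abs_sub_le_one_add_setDist_dyadIcc {c d : ℝ} {k : ℤ} (hcd : c ≤ d) (hk : d - c ≤ 2 ^ k)
    (m : ℤ) : |m - c / 2 ^ k| ≤ 1 + setDist (dyadIcc k m) (Icc c d) / 2 ^ k := by
  have hp : (0 : ℝ) < 2 ^ k := zpow_pos two_pos k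
  have hdist : |2 ^ k * m - c| - 2 ^ k ≤ setDist (dyadIcc k m) (Icc c d) := by
    refine le_setDist (dyadIcc_nonempty k m) (nonempty_Icc.2 hcd) fun x hx y hy => ?_
    obtain ⟨hx₁, hx₂⟩ := hx
    obtain ⟨hy₁, hy₂⟩ := hy
    rw [Real.dist_eq]
    rcases abs_cases (2 ^ k * m - c) with ⟨h, -⟩ | ⟨h, -⟩ <;> rw [h]
    · linarith [le_abs_self (x - y)]
    · linarith [neg_abs_le (x - y)]
  calc |m - c / 2 ^ k| = |2 ^ k * m - c| / 2 ^ k := by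
        rw [← abs_of_pos hp, ← abs_div, abs_of_pos hp]; congr 1; field_simp
  _ ≤ (2 ^ k + setDist (dyadIcc k m) (Icc c d)) / 2 ^ k := by gcongr; linarith
  _ = _ := by rw [add_div, div_self hp.ne']

/-- Up to the shift `m = n + ⌊c / 2 ^ k⌋`, this weight dominates `dyadicDecay N k m [c, d]`;
the offset `1 / 2` keeps it finite at `n = 0`. -/
noncomputable def decayWeight (N : ℝ) (n : ℤ) : ℝ :=
  (|(n : ℝ) + 1 / 2| / 3) ^ (-N)

lemma decayWeight_nonneg (N : ℝ) (n : ℤ) : 0 ≤ decayWeight N n :=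
  Real.rpow_nonneg (by positivity) _

lemma summable_decayWeight {N : ℝ} (hN : 1 < N) : Summable (decayWeight N) := by
  refine (((Real.summable_one_div_int_add_rpow (1 / 2) N).2 hN).mul_left (3 ^ N)).congr
    fun n => ?_
  rw [decayWeight, Real.div_rpow (abs_nonneg _) (by norm_num), Real.rpow_neg (abs_nonneg _),
    Real.rpow_neg (by norm_num)]
  field_simp

lemma dyadicDecay_add_floor_le {N c d : ℝ} {k : ℤ} (hN : 0 ≤ N) (hcd : c ≤ d)
    (hk : d - c ≤ 2 ^ k) (n : ℤ) :
    dyadicDecay N k (n + ⌊c / 2 ^ k⌋) (Icc c d) ≤ decayWeight N n := by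
  have hdist := setDist_nonneg (dyadIcc k (n + ⌊c / 2 ^ k⌋)) (Icc c d)
  have hshift := abs_sub_le_one_add_setDist_dyadIcc hcd hk (n + ⌊c / 2 ^ k⌋)
  have hfract : |(n : ℝ) + 1 / 2| - 3 / 2 ≤ |((n + ⌊c / 2 ^ k⌋ : ℤ) : ℝ) - c / 2 ^ k| := by
    have hθ : |Int.fract (c / 2 ^ k) + 1 / 2| ≤ 3 / 2 := abs_le.2
      ⟨by linarith [Int.fract_nonneg (c / 2 ^ k)], by linarith [Int.fract_lt_one (c / 2 ^ k)]⟩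
    have hsplit : ((n + ⌊c / 2 ^ k⌋ : ℤ) : ℝ) - c / 2 ^ k =
        n + 1 / 2 - (Int.fract (c / 2 ^ k) + 1 / 2) := by
      rw [← Int.self_sub_floor]; push_cast; ring
    rw [hsplit]
    linarith [abs_sub_abs_le_abs_sub ((n : ℝ) + 1 / 2) (Int.fract (c / 2 ^ k) + 1 / 2)]
  have hpos : 0 < |(n : ℝ) + 1 / 2| / 3 := by
    refine div_pos (abs_pos.2 fun h => ?_) three_pos
    have : 2 * n + 1 = 0 := by exact_mod_cast (by linarith : 2 * (n : ℝ) + 1 = 0)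
    omega
  refine Real.rpow_le_rpow_of_nonpos hpos ?_ (neg_nonpos.2 hN)
  rcases le_total |(n : ℝ) + 1 / 2| 3 with h | h
  · have : 0 ≤ setDist (dyadIcc k (n + ⌊c / 2 ^ k⌋)) (Icc c d) / 2 ^ k := by positivity
    linarith
  · linarith

lemma tsum_ofReal_dyadicDecay_le {N c d : ℝ} {k : ℤ} (hN : 1 < N) (hcd : c ≤ d)
    (hk : d - c ≤ 2 ^ k) :
    ∑' m : ℤ, ENNReal.ofReal (dyadicDecay N k m (Icc c d)) ≤
      ENNReal.ofReal (∑' n, decayWeight N n) := by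
  rw [ENNReal.ofReal_tsum_of_nonneg (decayWeight_nonneg N) (summable_decayWeight hN),
    ← (Equiv.addRight ⌊c / 2 ^ k⌋).tsum_eq]
  exact ENNReal.tsum_le_tsum fun n =>
    ENNReal.ofReal_le_ofReal (dyadicDecay_add_floor_le (by linarith) hcd hk n)

lemma tsum_ofReal_div_two_zpow_le {L : ℝ} (hL : 0 < L) :
    ∑' k : {k : ℤ // L < 2 ^ k}, ENNReal.ofReal (L / 2 ^ (k : ℤ)) ≤ 2 := by
  set k₀ := Int.clog 2 L
  have hk₀ : L ≤ 2 ^ k₀ := by exact_mod_cast Int.self_le_zpow_clog one_lt_two L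
  have hle : ∀ k : {k : ℤ // L < 2 ^ k}, k₀ ≤ k := fun k =>
    (Int.le_zpow_iff_clog_le one_lt_two hL).1 (by exact_mod_cast k.2.le)
  let e : {k : ℤ // L < 2 ^ k} → ℕ := fun k => (k - k₀).toNat
  have he : Function.Injective e := fun k l hkl => by
    have := hle k
    have := hle l
    exact Subtype.ext (by simp only [e] at hkl; omega)
  have hterm (k : {k : ℤ // L < 2 ^ k}) : ENNReal.ofReal (L / 2 ^ (k : ℤ)) ≤ 2⁻¹ ^ e k := by
    have hk : (k : ℤ) = k₀ + (e k : ℤ) := by have := hle k; simp only [e]; omega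
    rw [← ENNReal.ofReal_ofNat 2, ← ENNReal.ofReal_inv_of_pos two_pos,
      ← ENNReal.ofReal_pow (by norm_num)]
    refine ENNReal.ofReal_le_ofReal ?_
    rw [hk, zpow_add₀ two_ne_zero, zpow_natCast, inv_pow]
    calc L / (2 ^ k₀ * 2 ^ e k) ≤ 2 ^ k₀ / (2 ^ k₀ * 2 ^ e k) := by gcongr
    _ = (2 ^ e k)⁻¹ := by field_simp
  calc ∑' k : {k : ℤ // L < 2 ^ k}, ENNReal.ofReal (L / 2 ^ (k : ℤ))
      ≤ ∑' k : {k : ℤ // L < 2 ^ k}, 2⁻¹ ^ e k := ENNReal.tsum_le_tsum hterm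
  _ ≤ ∑' n : ℕ, 2⁻¹ ^ n := ENNReal.tsum_comp_le_tsum_of_injective he _
  _ = 2 := by rw [ENNReal.tsum_geometric, ENNReal.one_sub_inv_two, inv_inv]

lemma tsum_ofReal_mul_dyadicDecay_le {N c d : ℝ} (hN : 1 < N) (hcd : c < d) :
    ∑' K : {km : ℤ × ℤ // d - c < 2 ^ km.1},
        ENNReal.ofReal ((d - c) / 2 ^ K.1.1 * dyadicDecay N K.1.1 K.1.2 (Icc c d)) ≤
      ENNReal.ofReal (2 * ∑' n, decayWeight N n) := by
  rw [← (Equiv.prodSubtypeFstEquivSubtypeProd (β := ℤ)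
    (p := fun k : ℤ => d - c < 2 ^ k)).symm.tsum_eq, ENNReal.tsum_prod']
  calc ∑' (k : {k : ℤ // d - c < 2 ^ k}) (m : ℤ),
        ENNReal.ofReal ((d - c) / 2 ^ (k : ℤ) * dyadicDecay N k m (Icc c d))
      = ∑' k : {k : ℤ // d - c < 2 ^ k}, ENNReal.ofReal ((d - c) / 2 ^ (k : ℤ)) *
          ∑' m : ℤ, ENNReal.ofReal (dyadicDecay N k m (Icc c d)) := by
        congr 1; ext k
        rw [← ENNReal.tsum_mul_left]
        congr 1; ext m
        exact ENNReal.ofReal_mul (div_nonneg (by linarith) (zpow_pos two_pos _).le)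
  _ ≤ ∑' k : {k : ℤ // d - c < 2 ^ k}, ENNReal.ofReal ((d - c) / 2 ^ (k : ℤ)) *
          ENNReal.ofReal (∑' n, decayWeight N n) := by
        gcongr with k
        exact tsum_ofReal_dyadicDecay_le hN hcd.le k.2.le
  _ ≤ 2 * ENNReal.ofReal (∑' n, decayWeight N n) := by
        rw [ENNReal.tsum_mul_right]
        gcongr
        exact tsum_ofReal_div_two_zpow_le (by linarith)
  _ = _ := by rw [ENNReal.ofReal_mul zero_le_two, ENNReal.ofReal_ofNat]

/-- If `b` is integrable, supported on an interval `J = [c,d]`, with mean zero and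
`‖b‖₁ ≤ lam |J|`, and `Φ_K` is an `L^∞`-normalized bump adapted to a dyadic interval
`K` with `|K| > |J|`, then `|⟨b, Φ_K⟩| ≲ lam |J| (|J|/|K|) (1+dist(K,J)/|K|)^{-10}`,
and consequently `Σ_{|K|>|J|} |⟨b, Φ_K⟩| ≲ lam |J|`. -/
theorem bad_piece_pairing_bound :
    ∃ C > (0:ℝ), ∀ lam : ℝ, 0 < lam → ∀ c d : ℝ, c < d →
      ∀ b : ℝ → ℝ, Integrable b volume → Function.support b ⊆ Set.Icc c d →
        (∫ y : ℝ, b y) = 0 → (∫ y : ℝ, |b y|) ≤ lam * (d - c) →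
      ∀ Φ : ℤ → ℤ → ℝ → ℝ,
        (∀ k m : ℤ, Differentiable ℝ (Φ k m)) →
        (∀ k m : ℤ, ∀ x : ℝ,
          |Φ k m x| ≤ (1 + Metric.infDist x (dyadIcc k m) / (2:ℝ) ^ k) ^ (-(10:ℝ))) →
        (∀ k m : ℤ, ∀ x : ℝ,
          |deriv (Φ k m) x| ≤ ((2:ℝ) ^ k)⁻¹ *
            (1 + Metric.infDist x (dyadIcc k m) / (2:ℝ) ^ k) ^ (-(10:ℝ))) →
        (∀ k m : ℤ, d - c < (2:ℝ) ^ k →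
          |∫ y : ℝ, b y * Φ k m y| ≤
            C * lam * (d - c) * ((d - c) / (2:ℝ) ^ k) *
              (1 + setDist (dyadIcc k m) (Set.Icc c d) / (2:ℝ) ^ k) ^ (-(10:ℝ))) ∧
        (∑' K : {km : ℤ × ℤ // d - c < (2:ℝ) ^ km.1},
            ENNReal.ofReal |∫ y : ℝ, b y * Φ K.1.1 K.1.2 y|) ≤
          ENNReal.ofReal (C * lam * (d - c)) := by
  set S := ∑' n, decayWeight 10 n
  have hS : 0 ≤ S := tsum_nonneg (decayWeight_nonneg 10)
  refine ⟨1 + 2 * S, by positivity, fun lam _ c d hcd b hb hsupp hmean hL1 Φ hΦ _ hΦ' => ?_⟩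
  have hmass : 0 ≤ lam * (d - c) := (integral_nonneg fun y => abs_nonneg (b y)).trans hL1
  have hpair (k m : ℤ) := abs_integral_mul_le_dyadicDecay hb hsupp hmean hL1 hcd.le
    (by norm_num : (0 : ℝ) ≤ 10) (hΦ k m) (hΦ' k m)
  refine ⟨fun k m _ => (hpair k m).trans ?_, ?_⟩
  · have hX := (abs_nonneg _).trans (hpair k m)
    calc _ ≤ (1 + 2 * S) * (lam * (d - c) * ((d - c) / 2 ^ k * dyadicDecay 10 k m (Icc c d))) :=
          le_mul_of_one_le_left hX (by linarith)
    _ = _ := by rw [dyadicDecay]; ring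
  · calc ∑' K : {km : ℤ × ℤ // d - c < (2:ℝ) ^ km.1},
            ENNReal.ofReal |∫ y : ℝ, b y * Φ K.1.1 K.1.2 y|
        ≤ ∑' K : {km : ℤ × ℤ // d - c < (2:ℝ) ^ km.1}, ENNReal.ofReal (lam * (d - c)) *
            ENNReal.ofReal ((d - c) / 2 ^ K.1.1 * dyadicDecay 10 K.1.1 K.1.2 (Icc c d)) :=
          ENNReal.tsum_le_tsum fun K =>
            (ENNReal.ofReal_le_ofReal (hpair _ _)).trans_eq (ENNReal.ofReal_mul hmass)
      _ ≤ ENNReal.ofReal (lam * (d - c)) * ENNReal.ofReal (2 * S) := by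
          rw [ENNReal.tsum_mul_left]
          gcongr
          exact tsum_ofReal_mul_dyadicDecay_le (by norm_num) hcd
      _ ≤ ENNReal.ofReal ((1 + 2 * S) * lam * (d - c)) := by
          rw [← ENNReal.ofReal_mul hmass]
          exact ENNReal.ofReal_le_ofReal (by nlinarith)
end
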